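/- arXiv:1803.04705 — 3 statements merged into one kernel-verified Lean document; each statement's English description precedes it below -/
import Mathlib

section
/- Let φ : ℝⁿ → X be a non-constant almost periodic function into a complete metric space, let l(ε) denote the inclusion length of its set of ε-almost periods, and let δ*(ε) be the optimal modulus of uniform continuity (the supremum of δ such that d(φ(t₁),φ(t₂)) ≤ ε whenever ‖t₁−t₂‖_∞ ≤ δ). Then the hull H(φ) (the uniform closure of all translates φ(·+t)) can be covered by (l(ε)/δ*(ε) + 1)ⁿ open balls of radius 3ε in the uniform metric; in particular N_{3ε}(H(φ)) ≤ (l(ε)/δ*(ε) + 1)ⁿ, where N_r denotes the minimal number of open balls of radius r needed for a cover. -/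
/-!
Every translate `φ(· + s)` is `ε`-close to a translate `φ(· + t)` with `t ∈ [0, l]ⁿ`: take an
`ε`-almost period `τ` in the cube `-s + [0, l]ⁿ` and put `t = s + τ`. By the modulus of continuity,
`φ(· + t)` is in turn `ε`-close to `φ(· + g)` for the grid point `g ∈ (δℕ)ⁿ` below `t`, and the cube
meets at most `(l/δ + 1)ⁿ` such grid points. An element of the hull is `ε`-close to some translate,
which gives the radius `3ε`.
-/

noncomputable section

/-- `τ` is an `ε`-almost period of `φ`. -/
def IsAP {n : ℕ} {X : Type*} [PseudoMetricSpace X]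
    (φ : (Fin n → ℝ) → X) (ε : ℝ) (τ : Fin n → ℝ) : Prop :=
  ∀ t, dist (φ (t + τ)) (φ t) ≤ ε

/-- The bcfTranslate `φ(· + t)` of a bounded continuous function. -/
def bcfTranslate {n : ℕ} {X : Type*} [MetricSpace X]
    (φ : BoundedContinuousFunction (Fin n → ℝ) X) (t : Fin n → ℝ) :
    BoundedContinuousFunction (Fin n → ℝ) X :=
  φ.compContinuous ((Homeomorph.addRight t : (Fin n → ℝ) ≃ₜ (Fin n → ℝ)) : C(Fin n → ℝ, Fin n → ℝ))

/-- The hull of `φ`: the uniform closure of the set of its translates. -/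
def hull {n : ℕ} {X : Type*} [MetricSpace X]
    (φ : BoundedContinuousFunction (Fin n → ℝ) X) :
    Set (BoundedContinuousFunction (Fin n → ℝ) X) :=
  closure (Set.range (bcfTranslate φ))

open Set

section Grid

def cubeGrid (n : ℕ) (l δ : ℝ) : Finset (Fin n → ℝ) :=
  Fintype.piFinset fun _ => (Finset.range (⌊l / δ⌋₊ + 1)).image fun k : ℕ => (k : ℝ) * δ

lemma card_cubeGrid_le (n : ℕ) {l δ : ℝ} (hl : 0 ≤ l) (hδ : 0 ≤ δ) :
    ((cubeGrid n l δ).card : ℝ) ≤ (l / δ + 1) ^ n := by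
  have hcard : (cubeGrid n l δ).card ≤ (⌊l / δ⌋₊ + 1) ^ n := by
    rw [cubeGrid, Fintype.card_piFinset_const]
    exact Nat.pow_le_pow_left (Finset.card_image_le.trans (Finset.card_range _).le) n
  calc ((cubeGrid n l δ).card : ℝ) ≤ ((⌊l / δ⌋₊ : ℝ) + 1) ^ n := by exact_mod_cast hcard
    _ ≤ (l / δ + 1) ^ n := by
      gcongr
      exact Nat.floor_le (div_nonneg hl hδ)

lemma exists_lt_floor_add_one_abs_sub_mul_le {x l δ : ℝ} (hδ : 0 < δ) (hx : x ∈ Icc 0 l) :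
    ∃ k < ⌊l / δ⌋₊ + 1, |x - k * δ| ≤ δ := by
  refine ⟨⌊x / δ⌋₊, Nat.lt_succ_of_le (Nat.floor_le_floor (by gcongr; exact hx.2)), ?_⟩
  have hbelow : (⌊x / δ⌋₊ : ℝ) * δ ≤ x :=
    (le_div_iff₀ hδ).1 (Nat.floor_le (div_nonneg hx.1 hδ.le))
  have habove : x < ((⌊x / δ⌋₊ : ℝ) + 1) * δ := (div_lt_iff₀ hδ).1 (Nat.lt_floor_add_one _)
  rw [abs_le]
  constructor <;> linarith

lemma exists_mem_cubeGrid_norm_sub_le {n : ℕ} {l δ : ℝ} (hδ : 0 < δ) {t : Fin n → ℝ}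
    (ht : ∀ i, t i ∈ Icc 0 l) : ∃ g ∈ cubeGrid n l δ, ‖t - g‖ ≤ δ := by
  choose k hk hkt using fun i => exists_lt_floor_add_one_abs_sub_mul_le hδ (ht i)
  refine ⟨fun i => k i * δ, ?_, ?_⟩
  · simp only [cubeGrid, Fintype.mem_piFinset, Finset.mem_image, Finset.mem_range]
    exact fun i => ⟨k i, hk i, rfl⟩
  · exact (pi_norm_le_iff_of_nonneg hδ.le).2 fun i => hkt i

end Grid

section Translates

variable {n : ℕ} {X : Type*} [MetricSpace X] (φ : BoundedContinuousFunction (Fin n → ℝ) X)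

lemma bcfTranslate_apply (t u : Fin n → ℝ) : bcfTranslate φ t u = φ (u + t) := rfl

lemma dist_bcfTranslate_add_le_of_isAP {ε : ℝ} {τ : Fin n → ℝ} (hτ : IsAP (⇑φ) ε τ)
    (s : Fin n → ℝ) : dist (bcfTranslate φ s) (bcfTranslate φ (s + τ)) ≤ ε := by
  have hε : 0 ≤ ε := dist_nonneg.trans (hτ 0)
  refine (BoundedContinuousFunction.dist_le hε).2 fun u => ?_
  rw [bcfTranslate_apply, bcfTranslate_apply, dist_comm, ← add_assoc]
  exact hτ (u + s)

lemma dist_bcfTranslate_le_of_norm_sub_le {ε δ : ℝ}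
    (hmod : ∀ t₁ t₂ : Fin n → ℝ, ‖t₁ - t₂‖ ≤ δ → dist (φ t₁) (φ t₂) ≤ ε)
    {a b : Fin n → ℝ} (hab : ‖a - b‖ ≤ δ) : dist (bcfTranslate φ a) (bcfTranslate φ b) ≤ ε := by
  have hε : 0 ≤ ε := dist_nonneg.trans (hmod a b hab)
  refine (BoundedContinuousFunction.dist_le hε).2 fun u => ?_
  rw [bcfTranslate_apply, bcfTranslate_apply]
  exact hmod _ _ (by rwa [add_sub_add_left_eq_sub])

lemma exists_bcfTranslate_mem_cube_dist_le {ε l : ℝ}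
    (hincl : ∀ a : Fin n → ℝ, ∃ τ, (∀ i, τ i ∈ Icc (a i) (a i + l)) ∧ IsAP (⇑φ) ε τ)
    (s : Fin n → ℝ) :
    ∃ t : Fin n → ℝ, (∀ i, t i ∈ Icc 0 l) ∧ dist (bcfTranslate φ s) (bcfTranslate φ t) ≤ ε := by
  obtain ⟨τ, hτ, hτAP⟩ := hincl (-s)
  refine ⟨s + τ, fun i => ?_, dist_bcfTranslate_add_le_of_isAP φ hτAP s⟩
  have := hτ i
  simp only [Pi.neg_apply, mem_Icc, Pi.add_apply] at this ⊢
  constructor <;> linarith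

end Translates

theorem hull_covering_general {n : ℕ} {X : Type*} [MetricSpace X]
    (φ : BoundedContinuousFunction (Fin n → ℝ) X)
    (ε l δ : ℝ) (hε : 0 < ε) (hl : 0 ≤ l) (hδ : 0 < δ)
    (hincl : ∀ a : Fin n → ℝ, ∃ τ, (∀ i, τ i ∈ Set.Icc (a i) (a i + l)) ∧
      IsAP (⇑φ) ε τ)
    (hmod : ∀ t₁ t₂ : Fin n → ℝ, ‖t₁ - t₂‖ ≤ δ → dist (φ t₁) (φ t₂) ≤ ε) :
    ∃ T : Finset (Fin n → ℝ), (T.card : ℝ) ≤ (l / δ + 1) ^ n ∧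
      ∀ ψ ∈ hull φ, ∃ t ∈ T, dist ψ (bcfTranslate φ t) < 3 * ε := by
  refine ⟨cubeGrid n l δ, card_cubeGrid_le n hl hδ.le, fun ψ hψ => ?_⟩
  obtain ⟨_, ⟨s, rfl⟩, hψs⟩ := Metric.mem_closure_iff.1 hψ ε hε
  obtain ⟨t, ht, hst⟩ := exists_bcfTranslate_mem_cube_dist_le φ hincl s
  obtain ⟨g, hg, htg⟩ := exists_mem_cubeGrid_norm_sub_le hδ ht
  refine ⟨g, hg, ?_⟩
  calc dist ψ (bcfTranslate φ g)
      ≤ dist ψ (bcfTranslate φ s) + dist (bcfTranslate φ s) (bcfTranslate φ t)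
        + dist (bcfTranslate φ t) (bcfTranslate φ g) := dist_triangle4 _ _ _ _
    _ < 3 * ε := by linarith [dist_bcfTranslate_le_of_norm_sub_le φ hmod htg]

/-- The hull of an almost periodic function can be covered by
`(l(ε)/δ*(ε) + 1)^n` open balls of radius `3ε` centered at translates. -/
theorem hull_covering {n : ℕ} {X : Type*} [MetricSpace X]
    (φ : BoundedContinuousFunction (Fin n → ℝ) X)
    (hnc : ∃ t₁ t₂, φ t₁ ≠ φ t₂)
    (ε l δ : ℝ) (hε : 0 < ε) (hl : 0 ≤ l) (hδ : 0 < δ)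
    (hincl : ∀ a : Fin n → ℝ, ∃ τ, (∀ i, τ i ∈ Set.Icc (a i) (a i + l)) ∧
      IsAP (⇑φ) ε τ)
    (hmod : ∀ t₁ t₂ : Fin n → ℝ, ‖t₁ - t₂‖ ≤ δ → dist (φ t₁) (φ t₂) ≤ ε) :
    ∃ T : Finset (Fin n → ℝ), (T.card : ℝ) ≤ (l / δ + 1) ^ n ∧
      ∀ ψ ∈ hull φ, ∃ t ∈ T, dist ψ (bcfTranslate φ t) < 3 * ε :=
  hull_covering_general φ ε l δ hε hl hδ hincl hmod
end
end

section
/- Let ω = (ω₁,…,ω_m) satisfy the Diophantine condition of order ν ≥ 0 with ν(m−1) < 1, and let (q_k) be a sequence of convergents satisfying (A1) |q_k ω|_m ≤ Ĉ q_{k+1}^(-1/m), (A2) q_{k+1} = O(q_k^(1+ν)) with partial quotients a_{k+1} = ⌊q_{k+1}/q_k⌋ = O(q_k^ν), and (A3) the tail-sum estimate. Then for every real number A there exists τ, a nonnegative-integer combination τ = Σ_{k=k₀}^K p_k q_k with 0 ≤ p_k ≤ a_{k+1} (or τ = 0, or the negative of such a sum), such that |τ − A| ≤ q_{k₀} and |τω|_m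 ≤ C₂ · k₀ / q_{k₀}^η, where η = (1 − ν(m−1))/m and C₂ depends only on ω. -/
/-!
Along the greedy expansion `x = Σ p_k q_k + r`, each level `k` costs at most
`p_k |q_k ω|_m ≤ a_{k+1} |q_k ω|_m ≤ C q_k^(-η)` by (A1) and (A2). Since reducing a remainder
`x` modulo some `q_k ≤ x` more than halves it, the levels actually used are so sparse that
their costs form a geometric series dominated by its last term `C q_{k₀}^(-η)`.
If `(q_k)` is bounded it is eventually constant, and the trivial bound
`|θ|_m ≤ 1/2` suffices.
-/

noncomputable section

/-- Sup-norm distance from a point of `ℝ^m` to the integer lattice `ℤ^m`. -/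
def distZ {m : ℕ} (θ : Fin m → ℝ) : ℝ :=
  ⨅ p : Fin m → ℤ, ‖θ - fun i => (p i : ℝ)‖

/-- `ω` satisfies the Diophantine condition of order `ν` with constant `C_d`. -/
def DioCond (m : ℕ) (ω : Fin m → ℝ) (ν C_d : ℝ) : Prop :=
  ∀ q : ℕ, 1 ≤ q → C_d * (q : ℝ) ^ (-(1 + ν) / m) ≤ distZ (fun i => (q : ℝ) * ω i)

open Metric Finset

namespace Ostrowski

def intLattice (m : ℕ) : AddSubgroup (Fin m → ℝ) :=
  (AddMonoidHom.compLeft (Int.castAddHom ℝ) (Fin m)).range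

-- `distZ θ` is the quotient norm of `θ` in `ℝ^m ⧸ ℤ^m` (`distZ_eq_norm_mk`), which makes
-- `|(a + b) ω|_m ≤ |a ω|_m + |b ω|_m` and `|n a ω|_m ≤ n |a ω|_m` instances of the norm axioms.
abbrev Torus (m : ℕ) := (Fin m → ℝ) ⧸ intLattice m

section Torus

variable {m : ℕ}

lemma distZ_eq_norm_mk (θ : Fin m → ℝ) : distZ θ = ‖(θ : Torus m)‖ := by
  have hsurj : Function.Surjective fun p : Fin m → ℤ => (⟨_, p, rfl⟩ : intLattice m) := by
    rintro ⟨_, p, rfl⟩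
    exact ⟨p, rfl⟩
  rw [QuotientAddGroup.norm_mk, infDist_eq_iInf, iInf, ← hsurj.range_comp]
  simp only [dist_eq_norm]
  rfl

lemma norm_le_half (z : Torus m) : ‖z‖ ≤ 1 / 2 := by
  obtain ⟨θ, rfl⟩ := QuotientAddGroup.mk_surjective z
  have hbdd : BddBelow (Set.range fun p : Fin m → ℤ => ‖θ - fun i => (p i : ℝ)‖) :=
    ⟨0, by rintro _ ⟨p, rfl⟩; exact norm_nonneg _⟩
  rw [← distZ_eq_norm_mk]
  refine (ciInf_le hbdd fun i => round (θ i)).trans ?_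
  refine (pi_norm_le_iff_of_nonneg (by norm_num)).2 fun i => ?_
  exact abs_sub_round (θ i)

lemma distZ_mul_of_abs_eq {τ : ℝ} {n : ℕ} (h : |τ| = n) (ω : Fin m → ℝ) :
    distZ (fun i => τ * ω i) = ‖n • (ω : Torus m)‖ := by
  rw [show (fun i => τ * ω i) = τ • ω from rfl, distZ_eq_norm_mk]
  rcases (abs_eq (Nat.cast_nonneg n)).1 h with rfl | rfl
  · rw [Nat.cast_smul_eq_nsmul, QuotientAddGroup.mk_nsmul]
  · rw [neg_smul, QuotientAddGroup.mk_neg, norm_neg, Nat.cast_smul_eq_nsmul,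
      QuotientAddGroup.mk_nsmul]

end Torus

lemma one_sub_two_rpow_neg_mul_add_le {η s Q x : ℝ} (hη : 0 ≤ η) (hs : 0 < s) (hsQ : s ≤ Q)
    (hsx : 2 * s ≤ x) : (1 - 2 ^ (-η)) * Q ^ (-η) + x ^ (-η) ≤ s ^ (-η) := by
  have hη' : -η ≤ 0 := neg_nonpos.2 hη
  have hQ : Q ^ (-η) ≤ s ^ (-η) := Real.rpow_le_rpow_of_nonpos hs hsQ hη'
  have hx : x ^ (-η) ≤ 2 ^ (-η) * s ^ (-η) := by
    rw [← Real.mul_rpow zero_le_two hs.le]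
    exact Real.rpow_le_rpow_of_nonpos (by positivity) hsx hη'
  have hθ : (2 : ℝ) ^ (-η) ≤ 1 := Real.rpow_le_one_of_one_le_of_nonpos one_le_two hη'
  nlinarith

lemma mul_rpow_neg_le {a Q Q' r : ℝ} (ha : 0 < a) (hQ : 0 < Q) (h : a * Q ≤ Q') (hr : 0 ≤ r) :
    a * Q' ^ (-r) ≤ a ^ (1 - r) * Q ^ (-r) :=
  calc a * Q' ^ (-r) ≤ a * (a * Q) ^ (-r) :=
        mul_le_mul_of_nonneg_left
          (Real.rpow_le_rpow_of_nonpos (by positivity) h (neg_nonpos.2 hr)) ha.le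
    _ = a ^ (1 - r) * Q ^ (-r) := by
        rw [Real.mul_rpow ha.le hQ.le, ← mul_assoc, sub_eq_add_neg, Real.rpow_add ha,
          Real.rpow_one]

/-- With `Q = q_k`, `Q' = q_{k+1}` and `d = |q_k ω|_m`, this is the paper's estimate
`a_{k+1} |q_k ω|_m ≤ Ĉ (a_{k+1}^m / (a_{k+1} q_k))^(1/m) ≤ C₁ q_k^(-η)`. -/
lemma partialQuotient_mul_le {m : ℕ} (hm : 0 < m) {ν Chat C' d : ℝ} {Q Q' : ℕ} (hQ : 0 < Q)
    (hQQ' : Q ≤ Q') (hChat : 0 ≤ Chat) (hC' : 0 ≤ C')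
    (hd : d ≤ Chat * (Q' : ℝ) ^ (-(1 : ℝ) / m)) (ha : ((Q' / Q : ℕ) : ℝ) ≤ C' * (Q : ℝ) ^ ν) :
    ((Q' / Q : ℕ) : ℝ) * d ≤
      Chat * C' ^ (1 - 1 / (m : ℝ)) * (Q : ℝ) ^ (-((1 - ν * (m - 1)) / m)) := by
  have ha0 : (0 : ℝ) < (Q' / Q : ℕ) := by exact_mod_cast Nat.div_pos hQQ' hQ
  have haQ : ((Q' / Q : ℕ) : ℝ) * Q ≤ Q' := by exact_mod_cast Nat.div_mul_le_self Q' Q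
  set a : ℝ := ((Q' / Q : ℕ) : ℝ)
  have hQR : (0 : ℝ) < Q := by exact_mod_cast hQ
  have hmR : (1 : ℝ) ≤ m := by exact_mod_cast hm
  have hr : 0 ≤ 1 - 1 / (m : ℝ) := sub_nonneg.2 ((div_le_one₀ (by linarith)).2 hmR)
  rw [neg_div] at hd
  calc a * d ≤ Chat * (a * (Q' : ℝ) ^ (-(1 / (m : ℝ)))) := by nlinarith
    _ ≤ Chat * (a ^ (1 - 1 / (m : ℝ)) * (Q : ℝ) ^ (-(1 / (m : ℝ)))) :=
        mul_le_mul_of_nonneg_left (mul_rpow_neg_le ha0 hQR haQ (by positivity)) hChat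
    _ ≤ Chat * ((C' * (Q : ℝ) ^ ν) ^ (1 - 1 / (m : ℝ)) * (Q : ℝ) ^ (-(1 / (m : ℝ)))) := by
        gcongr
    _ = Chat * C' ^ (1 - 1 / (m : ℝ)) * (Q : ℝ) ^ (-((1 - ν * (m - 1)) / m)) := by
        rw [Real.mul_rpow hC' (by positivity), ← Real.rpow_mul hQR.le, mul_assoc, mul_assoc,
          ← Real.rpow_add hQR]
        congr 3
        field_simp
        ring

section Greedy

variable (q : ℕ → ℕ) (k₀ : ℕ)

/-- `greedySum q k₀ n x` takes the digits of `x` greedily from the level `k₀ + n - 1` down to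
the level `k₀`. -/
def greedySum : ℕ → ℕ → ℕ
  | 0, _ => 0
  | n + 1, x => q (k₀ + n) * (x / q (k₀ + n)) + greedySum n (x % q (k₀ + n))

def IsOstrowskiApprox (N g : ℕ) : Prop :=
  g ≤ N ∧ N < g + q k₀ ∧ ∃ K : ℕ, ∃ p : ℕ → ℕ,
    (∀ k, k₀ ≤ k → k ≤ K → p k ≤ q (k + 1) / q k) ∧ g = ∑ k ∈ Icc k₀ K, p k * q k

variable {q k₀}

lemma greedySum_succ_of_lt {n x : ℕ} (hx : x < q (k₀ + n)) :
    greedySum q k₀ (n + 1) x = greedySum q k₀ n x := by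
  simp [greedySum, Nat.div_eq_of_lt hx, Nat.mod_eq_of_lt hx]

lemma greedySum_eq_zero_of_lt (hmono : Monotone q) {x : ℕ} (hx : x < q k₀) :
    ∀ n, greedySum q k₀ n x = 0
  | 0 => rfl
  | n + 1 => by
    rw [greedySum_succ_of_lt (hx.trans_le (hmono (Nat.le_add_right _ _)))]
    exact greedySum_eq_zero_of_lt hmono hx n

lemma greedySum_le_and_lt (hq : ∀ k, 0 < q k) :
    ∀ n x, x < q (k₀ + n) → greedySum q k₀ n x ≤ x ∧ x < greedySum q k₀ n x + q k₀
  | 0, x, hx => by simpa [greedySum] using hx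
  | n + 1, x, _ => by
    obtain ⟨h₁, h₂⟩ := greedySum_le_and_lt hq n (x % q (k₀ + n)) (Nat.mod_lt _ (hq _))
    have := Nat.div_add_mod x (q (k₀ + n))
    simp only [greedySum]
    omega

lemma exists_digits_greedySum (hq : ∀ k, 0 < q k) :
    ∀ n x, x < q (k₀ + n) → ∃ p : ℕ → ℕ, (∀ k, p k ≤ q (k + 1) / q k) ∧
      greedySum q k₀ n x = ∑ k ∈ Ico k₀ (k₀ + n), p k * q k
  | 0, _, _ => ⟨0, fun _ => Nat.zero_le _, by simp [greedySum]⟩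
  | n + 1, x, hx => by
    obtain ⟨p, hp, hsum⟩ :=
      exists_digits_greedySum hq n (x % q (k₀ + n)) (Nat.mod_lt _ (hq _))
    refine ⟨Function.update p (k₀ + n) (x / q (k₀ + n)), fun k => ?_, ?_⟩
    · rcases eq_or_ne k (k₀ + n) with rfl | hk
      · simpa [add_assoc] using Nat.div_le_div_right hx.le
      · simpa [hk] using hp k
    · rw [← add_assoc, sum_Ico_succ_top (by omega), greedySum, hsum, Function.update_self,
        add_comm, mul_comm]
      congr 1
      refine sum_congr rfl fun k hk => ?_
      rw [Function.update_of_ne (by simp at hk; omega)]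

variable {E : Type*} [SeminormedAddCommGroup E]

lemma norm_mul_div_nsmul_le {Q Q' x : ℕ} (hx : x ≤ Q') (z : E) :
    ‖(Q * (x / Q)) • z‖ ≤ ((Q' / Q : ℕ) : ℝ) * ‖Q • z‖ :=
  calc ‖(Q * (x / Q)) • z‖ ≤ ((x / Q : ℕ) : ℝ) * ‖Q • z‖ := by
        rw [mul_nsmul]
        exact norm_nsmul_le
    _ ≤ ((Q' / Q : ℕ) : ℝ) * ‖Q • z‖ := by gcongr

/-- Each greedy step `x ↦ x % q K` with `q K ≤ x` more than halves the remainder, so the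
potential `- c x^(-η)` pays for the cost `c (1 - 2^(-η)) (q K)^(-η)` of the step. -/
lemma norm_greedySum_nsmul_le_sub (hq : ∀ k, 0 < q k) (hmono : Monotone q) {z : E} {η c : ℝ}
    (hη : 0 ≤ η) (hc : 0 ≤ c)
    (hterm : ∀ K, k₀ ≤ K →
      ((q (K + 1) / q K : ℕ) : ℝ) * ‖q K • z‖ ≤ c * (1 - 2 ^ (-η)) * (q K : ℝ) ^ (-η)) :
    ∀ n x, q k₀ ≤ x → x < q (k₀ + n) →
      ‖greedySum q k₀ n x • z‖ ≤ c * (2 * (q k₀ : ℝ) ^ (-η) - (x : ℝ) ^ (-η))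
  | 0, _, hx, hx' => absurd hx' (not_lt.2 hx)
  | n + 1, x, hx, hx' => by
    set Q := q (k₀ + n)
    rcases lt_or_ge x Q with hxQ | hQx
    · rw [greedySum_succ_of_lt hxQ]
      exact norm_greedySum_nsmul_le_sub hq hmono hη hc hterm n x hx hxQ
    have hQ₀ : (q k₀ : ℝ) ≤ Q := by exact_mod_cast hmono (Nat.le_add_right k₀ n)
    have hq₀ : (0 : ℝ) < q k₀ := by exact_mod_cast hq k₀
    have hθ : (0 : ℝ) ≤ 1 - 2 ^ (-η) :=
      sub_nonneg.2 (Real.rpow_le_one_of_one_le_of_nonpos one_le_two (neg_nonpos.2 hη))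
    have hdigit : ‖(Q * (x / Q)) • z‖ ≤ c * (1 - 2 ^ (-η)) * (Q : ℝ) ^ (-η) :=
      (norm_mul_div_nsmul_le (Q' := q (k₀ + n + 1))
        (by simpa only [add_assoc] using hx'.le) z).trans (hterm _ (Nat.le_add_right k₀ n))
    have hstep : ‖greedySum q k₀ (n + 1) x • z‖ ≤
        c * (1 - 2 ^ (-η)) * (Q : ℝ) ^ (-η) + ‖greedySum q k₀ n (x % Q) • z‖ := by
      rw [greedySum, add_smul]
      exact (norm_add_le _ _).trans (add_le_add hdigit le_rfl)
    have hQpow : (Q : ℝ) ^ (-η) ≤ (q k₀ : ℝ) ^ (-η) :=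
      Real.rpow_le_rpow_of_nonpos hq₀ hQ₀ (neg_nonpos.2 hη)
    rcases lt_or_ge (x % Q) (q k₀) with hs | hs
    · have hxpow : (x : ℝ) ^ (-η) ≤ (q k₀ : ℝ) ^ (-η) :=
        Real.rpow_le_rpow_of_nonpos hq₀ (by exact_mod_cast hx) (neg_nonpos.2 hη)
      rw [greedySum_eq_zero_of_lt hmono hs, zero_smul, norm_zero, add_zero, mul_assoc] at hstep
      have : (1 - 2 ^ (-η)) * (Q : ℝ) ^ (-η) ≤ 2 * (q k₀ : ℝ) ^ (-η) - (x : ℝ) ^ (-η) := by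
        nlinarith [Real.rpow_nonneg (Nat.cast_nonneg Q) (-η),
          Real.rpow_nonneg zero_le_two (-η)]
      exact hstep.trans (mul_le_mul_of_nonneg_left this hc)
    · have ih := norm_greedySum_nsmul_le_sub hq hmono hη hc hterm n (x % Q) hs
        (Nat.mod_lt _ (hq _))
      have hsQ : x % Q < Q := Nat.mod_lt x (hq _)
      have hhalf : 2 * (x % Q) ≤ x := by
        have := Nat.div_add_mod x Q
        have := Nat.le_mul_of_pos_right Q (Nat.div_pos hQx (hq _))
        omega
      have key := one_sub_two_rpow_neg_mul_add_le (s := ((x % Q : ℕ) : ℝ)) (Q := Q) (x := x) hη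
        (hq₀.trans_le (by exact_mod_cast hs)) (by exact_mod_cast hsQ.le)
        (by exact_mod_cast hhalf)
      nlinarith

lemma norm_greedySum_nsmul_le (hq : ∀ k, 0 < q k) (hmono : Monotone q) {z : E} {η c : ℝ}
    (hη : 0 ≤ η) (hc : 0 ≤ c)
    (hterm : ∀ K, k₀ ≤ K →
      ((q (K + 1) / q K : ℕ) : ℝ) * ‖q K • z‖ ≤ c * (1 - 2 ^ (-η)) * (q K : ℝ) ^ (-η))
    {n x : ℕ} (hx : x < q (k₀ + n)) :
    ‖greedySum q k₀ n x • z‖ ≤ 2 * c * (q k₀ : ℝ) ^ (-η) := by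
  rcases lt_or_ge x (q k₀) with hx₀ | hx₀
  · rw [greedySum_eq_zero_of_lt hmono hx₀, zero_smul, norm_zero]
    positivity
  · have := norm_greedySum_nsmul_le_sub hq hmono hη hc hterm n x hx₀ hx
    have : 0 ≤ c * (x : ℝ) ^ (-η) := by positivity
    linarith

lemma exists_isOstrowskiApprox_of_not_bddAbove (hq : ∀ k, 0 < q k) (hmono : Monotone q)
    (hbdd : ¬BddAbove (Set.range q)) {z : E} {η c : ℝ} (hη : 0 ≤ η) (hc : 0 ≤ c)
    (hterm : ∀ K, k₀ ≤ K →
      ((q (K + 1) / q K : ℕ) : ℝ) * ‖q K • z‖ ≤ c * (1 - 2 ^ (-η)) * (q K : ℝ) ^ (-η))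
    (N : ℕ) : ∃ g, IsOstrowskiApprox q k₀ N g ∧ ‖g • z‖ ≤ 2 * c * (q k₀ : ℝ) ^ (-η) := by
  obtain ⟨_, ⟨n, rfl⟩, hn⟩ := not_bddAbove_iff.1 hbdd N
  have hN : N < q (k₀ + (n + 1)) := hn.trans_le (hmono (by omega))
  obtain ⟨p, hp, hsum⟩ := exists_digits_greedySum hq _ N hN
  obtain ⟨hle, hlt⟩ := greedySum_le_and_lt hq _ N hN
  refine ⟨greedySum q k₀ (n + 1) N, ⟨hle, hlt, k₀ + n, p, fun k _ _ => hp k, ?_⟩,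
    norm_greedySum_nsmul_le hq hmono hη hc hterm hN⟩
  rw [hsum, ← add_assoc, Ico_add_one_right_eq_Icc]

lemma isOstrowskiApprox_div_mul_of_forall_ge_eq (hq : 0 < q k₀) (hk₀ : 1 ≤ k₀)
    (hconst : ∀ k, k₀ ≤ k → q k = q k₀) (N : ℕ) :
    IsOstrowskiApprox q k₀ N (N / q k₀ * q k₀) := by
  refine ⟨Nat.div_mul_le_self _ _, ?_, k₀ + N / q k₀ - 1, fun _ => 1, fun k hk _ => ?_, ?_⟩
  · have := Nat.div_add_mod N (q k₀)
    have := Nat.mod_lt N hq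
    rw [Nat.mul_comm (N / q k₀)]
    omega
  · rw [hconst (k + 1) (by omega), hconst k hk, Nat.div_self hq]
  · rw [sum_congr rfl fun k hk => by rw [one_mul, hconst k (mem_Icc.1 hk).1], sum_const,
      Nat.card_Icc, smul_eq_mul]
    congr 1
    generalize N / q k₀ = t
    omega

def HasUniformOstrowskiApprox (q : ℕ → ℕ) (z : E) (η : ℝ) : Prop :=
  ∃ C₂ > 0, ∃ K₀ : ℕ, ∀ k₀ ≥ K₀, ∀ N : ℕ,
    ∃ g, IsOstrowskiApprox q k₀ N g ∧ ‖g • z‖ ≤ C₂ * k₀ / (q k₀ : ℝ) ^ η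

lemma hasUniformOstrowskiApprox_of_not_bddAbove (hq : ∀ k, 0 < q k) (hmono : Monotone q)
    (hbdd : ¬BddAbove (Set.range q)) {z : E} {η c : ℝ} (hη : 0 ≤ η) (hc : 0 < c)
    (hterm : ∀ K,
      ((q (K + 1) / q K : ℕ) : ℝ) * ‖q K • z‖ ≤ c * (1 - 2 ^ (-η)) * (q K : ℝ) ^ (-η)) :
    HasUniformOstrowskiApprox q z η := by
  refine ⟨2 * c, by positivity, 1, fun k₀ hk₀ N => ?_⟩
  obtain ⟨g, hg, hnorm⟩ := exists_isOstrowskiApprox_of_not_bddAbove hq hmono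
    hbdd hη hc.le (fun K _ => hterm K) N
  refine ⟨g, hg, hnorm.trans ?_⟩
  rw [Real.rpow_neg (Nat.cast_nonneg _), ← div_eq_mul_inv]
  exact div_le_div_of_nonneg_right
    (le_mul_of_one_le_right (by positivity) (by exact_mod_cast hk₀)) (by positivity)

lemma exists_forall_ge_eq_of_bddAbove (hmono : Monotone q)
    (hbdd : BddAbove (Set.range q)) : ∃ k₁, ∀ k, k₁ ≤ k → q k = q k₁ := by
  obtain ⟨k₁, hk₁⟩ := Nat.sSup_mem (Set.range_nonempty q) hbdd
  exact ⟨k₁, fun k hk => le_antisymm (hk₁ ▸ le_csSup hbdd ⟨k, rfl⟩) (hmono hk)⟩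

lemma hasUniformOstrowskiApprox_of_bddAbove {m : ℕ} (hq : ∀ k, 0 < q k) (hmono : Monotone q)
    (hbdd : BddAbove (Set.range q)) (z : Torus m) (η : ℝ) :
    HasUniformOstrowskiApprox q z η := by
  obtain ⟨k₁, hk₁⟩ := exists_forall_ge_eq_of_bddAbove hmono hbdd
  refine ⟨(q k₁ : ℝ) ^ η, Real.rpow_pos_of_pos (by exact_mod_cast hq k₁) η, k₁ + 1,
    fun k₀ hk₀ N => ⟨_, isOstrowskiApprox_div_mul_of_forall_ge_eq (hq k₀) (by omega)
      (fun k hk => (hk₁ k (by omega)).trans (hk₁ k₀ (by omega)).symm) N, ?_⟩⟩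
  rw [hk₁ k₀ (by omega), mul_div_right_comm,
    div_self (Real.rpow_pos_of_pos (by exact_mod_cast hq k₁) η).ne', one_mul]
  refine (norm_le_half _).trans ?_
  have : (1 : ℝ) ≤ k₀ := by exact_mod_cast (by omega : 1 ≤ k₀)
  linarith

end Greedy

lemma exists_abs_eq_and_abs_sub_le {A : ℝ} {g Q : ℕ} (hg : g ≤ ⌊|A|⌋₊)
    (hlt : ⌊|A|⌋₊ < g + Q) : ∃ τ : ℝ, |τ| = g ∧ |τ - A| ≤ Q := by
  have h₁ : (g : ℝ) ≤ |A| := (Nat.cast_le.2 hg).trans (Nat.floor_le (abs_nonneg A))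
  have h₂ : |A| < g + Q := (Nat.lt_floor_add_one _).trans_le (by exact_mod_cast hlt)
  rcases le_or_gt 0 A with hA | hA
  · rw [abs_of_nonneg hA] at h₁ h₂
    exact ⟨g, Nat.abs_cast g, abs_le.2 ⟨by linarith, by linarith⟩⟩
  · rw [abs_of_neg hA] at h₁ h₂
    exact ⟨-g, by simp, abs_le.2 ⟨by linarith, by linarith⟩⟩

end Ostrowski

open Ostrowski

theorem ostrowski_representation_general (m : ℕ) (hm : 0 < m) (ω : Fin m → ℝ)
    (ν : ℝ) (hνm : ν * (m - 1) < 1)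
    (q : ℕ → ℕ) (hq1 : ∀ k, 1 ≤ q k) (hqmono : Monotone q)
    (Chat : ℝ) (hChat : 0 < Chat)
    (hA1 : ∀ k, distZ (fun i => (q k : ℝ) * ω i) ≤
      Chat * (q (k + 1) : ℝ) ^ (-(1 : ℝ) / m))
    (hA2 : ∃ C' : ℝ, 0 < C' ∧ ∀ k,
      (q (k + 1) : ℝ) ≤ C' * (q k : ℝ) ^ ((1 : ℝ) + ν) ∧
      ((q (k + 1) / q k : ℕ) : ℝ) ≤ C' * (q k : ℝ) ^ ν) :
    ∃ C₂ : ℝ, 0 < C₂ ∧ ∃ K₀ : ℕ, ∀ k₀ : ℕ, K₀ ≤ k₀ → ∀ A : ℝ, ∃ τ : ℝ,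
      (τ = 0 ∨ ∃ K : ℕ, ∃ p : ℕ → ℕ,
        (∀ k, k₀ ≤ k → k ≤ K → p k ≤ q (k + 1) / q k) ∧
        (τ = ∑ k ∈ Finset.Icc k₀ K, ((p k : ℝ) * (q k : ℝ)) ∨
         τ = -∑ k ∈ Finset.Icc k₀ K, ((p k : ℝ) * (q k : ℝ)))) ∧
      |τ - A| ≤ (q k₀ : ℝ) ∧
      distZ (fun i => τ * ω i) ≤
        C₂ * k₀ / (q k₀ : ℝ) ^ ((1 - ν * (m - 1)) / m) := by
  obtain ⟨C', hC', hA2⟩ := hA2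
  set η : ℝ := (1 - ν * (m - 1)) / m
  have hη : 0 < η := div_pos (by linarith) (by exact_mod_cast hm)
  have hθ : 0 < 1 - (2 : ℝ) ^ (-η) :=
    sub_pos.2 (Real.rpow_lt_one_of_one_lt_of_neg one_lt_two (neg_neg_of_pos hη))
  set c := Chat * C' ^ (1 - 1 / (m : ℝ)) / (1 - 2 ^ (-η))
  have hterm (K : ℕ) : ((q (K + 1) / q K : ℕ) : ℝ) * ‖q K • (ω : Torus m)‖ ≤
      c * (1 - 2 ^ (-η)) * (q K : ℝ) ^ (-η) := by
    rw [div_mul_cancel₀ _ hθ.ne', ← distZ_mul_of_abs_eq (Nat.abs_cast (q K))]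
    exact partialQuotient_mul_le hm (hq1 K) (hqmono K.le_succ) hChat.le hC'.le (hA1 K) (hA2 K).2
  obtain ⟨C₂, hC₂, K₀, happrox⟩ : HasUniformOstrowskiApprox q (ω : Torus m) η := by
    by_cases hbdd : BddAbove (Set.range q)
    · exact hasUniformOstrowskiApprox_of_bddAbove hq1 hqmono hbdd _ η
    · exact hasUniformOstrowskiApprox_of_not_bddAbove hq1 hqmono hbdd hη.le
        (div_pos (by positivity) hθ) hterm
  refine ⟨C₂, hC₂, K₀, fun k₀ hk₀ A => ?_⟩
  obtain ⟨g, ⟨hgN, hNg, K, p, hp, hsum⟩, hnorm⟩ := happrox k₀ hk₀ ⌊|A|⌋₊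
  obtain ⟨τ, hτ, hτA⟩ := exists_abs_eq_and_abs_sub_le hgN hNg
  refine ⟨τ, Or.inr ⟨K, p, hp, ?_⟩, hτA, ?_⟩
  · rcases (abs_eq (Nat.cast_nonneg g)).1 hτ with rfl | rfl <;> simp [hsum]
  · rw [distZ_mul_of_abs_eq hτ]
    exact hnorm

/-- Greedy Ostrowski-type representation: every real `A` is within `q_{k₀}`
of a signed combination `τ = ±Σ_{k=k₀}^K p_k q_k` with `0 ≤ p_k ≤ a_{k+1}`
(or `τ = 0`), and `|τω|_m ≤ C₂ k₀ / q_{k₀}^η` with `η = (1 − ν(m−1))/m`. -/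
theorem ostrowski_representation (m : ℕ) (hm : 0 < m) (ω : Fin m → ℝ)
    (ν C_d : ℝ) (hν : 0 ≤ ν) (hνm : ν * (m - 1) < 1) (hC : 0 < C_d)
    (hdio : DioCond m ω ν C_d)
    (q : ℕ → ℕ) (hq1 : ∀ k, 1 ≤ q k) (hqmono : Monotone q)
    (Chat : ℝ) (hChat : 0 < Chat)
    (hA1 : ∀ k, distZ (fun i => (q k : ℝ) * ω i) ≤
      Chat * (q (k + 1) : ℝ) ^ (-(1 : ℝ) / m))
    (hA2 : ∃ C' : ℝ, 0 < C' ∧ ∀ k,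
      (q (k + 1) : ℝ) ≤ C' * (q k : ℝ) ^ ((1 : ℝ) + ν) ∧
      ((q (k + 1) / q k : ℕ) : ℝ) ≤ C' * (q k : ℝ) ^ ν)
    (hA3 : ∀ η' : ℝ, 0 < η' → ∃ Cη : ℝ, 0 < Cη ∧ ∀ N : ℕ, 1 ≤ N →
      (∑' k : ℕ, ((q (N + k) : ℝ)) ^ (-η')) ≤ Cη * N / (q N : ℝ) ^ η') :
    ∃ C₂ : ℝ, 0 < C₂ ∧ ∃ K₀ : ℕ, ∀ k₀ : ℕ, K₀ ≤ k₀ → ∀ A : ℝ, ∃ τ : ℝ,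
      (τ = 0 ∨ ∃ K : ℕ, ∃ p : ℕ → ℕ,
        (∀ k, k₀ ≤ k → k ≤ K → p k ≤ q (k + 1) / q k) ∧
        (τ = ∑ k ∈ Finset.Icc k₀ K, ((p k : ℝ) * (q k : ℝ)) ∨
         τ = -∑ k ∈ Finset.Icc k₀ K, ((p k : ℝ) * (q k : ℝ)))) ∧
      |τ - A| ≤ (q k₀ : ℝ) ∧
      distZ (fun i => τ * ω i) ≤
        C₂ * k₀ / (q k₀ : ℝ) ^ ((1 - ν * (m - 1)) / m) :=
  ostrowski_representation_general m hm ω ν hνm q hq1 hqmono Chat hChat hA1 hA2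
end
end

section
/- Let A be a real m×n matrix, Â the (m+n)×n matrix stacking the n×n identity on top of A, and φ̂(t) = Ât on 𝕋^(m+n). For θ in the closure of {Aq mod ℤ^m : q ∈ ℤⁿ}, the Diophantine dimension of the family of sets of integer solutions q ∈ ℤⁿ of |Aq − θ|_m ≤ ε equals the Diophantine dimension 𝔇𝔦(φ̂) of the almost periodic function φ̂, and the analogous equality holds for lower Diophantine dimensions. -/
/-!
The almost periods of the additive map `φ̂` are the `τ` with both `τ mod ℤⁿ` and `Aτ mod ℤᵐ` of
norm at most `ε`. If `q₀` solves `|Aq₀ − θ| ≤ ε`, then `q ↦ q − q₀` sends solutions to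
`2ε`-almost periods, and rounding an `ε`-almost period to an integer point and adding `q₀` moves it
by at most `ε` to a solution for `(K + 2)ε`, where `K` is a Lipschitz constant of `A`. So the two
inclusion lengths satisfy `G(2ε) ≤ F(ε)` and `F((K + 2)ε) ≤ G(ε) + 2ε`; both are at least `1/2`
for small `ε` (solution sets are relatively dense because `θ` lies in the closure of the orbit of
the compact torus). Comparisons of this shape, with constant factors in `ε` and in the values,
change `log F(ε) / log(1/ε)` only to `o(1) + (1 + o(1)) · (…)`, which preserves `limsup` and
`liminf`; when these are infinite both sides are the junk value `0`.
-/

noncomputable section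

/-- The flat torus `𝕋^k = ℝ^k/ℤ^k`. -/
abbrev Torus (k : ℕ) := Fin k → AddCircle (1 : ℝ)

/-- Reduction of a point of `ℝ^k` modulo `ℤ^k`. -/
def toTorus {k : ℕ} (x : Fin k → ℝ) : Torus k := fun i => (x i : AddCircle (1 : ℝ))

/-- The optimal inclusion length of the set of `ε`-almost periods of `φ`. -/
def inclLen {n : ℕ} {X : Type*} [PseudoMetricSpace X]
    (φ : (Fin n → ℝ) → X) (ε : ℝ) : ℝ :=
  sInf {L : ℝ | 0 ≤ L ∧
    ∀ a : Fin n → ℝ, ∃ τ, (∀ i, τ i ∈ Set.Icc (a i) (a i + L)) ∧ IsAP φ ε τ}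

/-- Optimal inclusion length of the set of integer solutions `q ∈ ℤⁿ` of
`|Aq − θ|_m ≤ ε`. -/
def matInclLen {m n : ℕ} (A : Matrix (Fin m) (Fin n) ℝ) (θ : Torus m)
    (ε : ℝ) : ℝ :=
  sInf {L : ℝ | 0 ≤ L ∧ ∀ a : Fin n → ℝ, ∃ q : Fin n → ℤ,
    (∀ i, a i ≤ (q i : ℝ) ∧ (q i : ℝ) ≤ a i + L) ∧
    dist (toTorus (A.mulVec fun j => (q j : ℝ))) θ ≤ ε}

open Filter Topology Set Matrix

section AsymptoticallyLE

variable {α : Type*} {l : Filter α} {f g : α → ℝ}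

def AsymptoticallyLE (l : Filter α) (f g : α → ℝ) : Prop :=
  ∃ a r σ : α → _, Tendsto a l (𝓝 0) ∧ Tendsto r l (𝓝 1) ∧ map σ l = l ∧
    ∀ᶠ x in l, f x ≤ a x + r x * g (σ x)

lemma isBoundedUnder_comp_of_map_eq {σ : α → α} (hσ : map σ l = l) (rel : ℝ → ℝ → Prop) :
    IsBoundedUnder rel l (g ∘ σ) ↔ IsBoundedUnder rel l g := by
  rw [IsBoundedUnder, ← Filter.map_map, hσ, IsBoundedUnder]

lemma isCoboundedUnder_comp_of_map_eq {σ : α → α} (hσ : map σ l = l) (rel : ℝ → ℝ → Prop) :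
    IsCoboundedUnder rel l (g ∘ σ) ↔ IsCoboundedUnder rel l g := by
  rw [IsCoboundedUnder, ← Filter.map_map, hσ, IsCoboundedUnder]

namespace AsymptoticallyLE

lemma isBoundedUnder_le (h : AsymptoticallyLE l f g) (hg : IsBoundedUnder (· ≤ ·) l g) :
    IsBoundedUnder (· ≤ ·) l f := by
  obtain ⟨a, r, σ, ha, hr, hσ, hfg⟩ := h
  obtain ⟨b, hb⟩ := (isBoundedUnder_comp_of_map_eq hσ _).2 hg
  refine ((ha.add (hr.mul_const b)).isBoundedUnder_le).mono_le ?_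
  filter_upwards [hfg, hb, hr.eventually (lt_mem_nhds one_pos)] with x hx hbx hrx
  exact hx.trans (add_le_add le_rfl (mul_le_mul_of_nonneg_left hbx hrx.le))

lemma limsup_le [NeBot l] (h : AsymptoticallyLE l f g) (hf : IsBoundedUnder (· ≥ ·) l f)
    (hg : IsBoundedUnder (· ≤ ·) l g) : limsup f l ≤ limsup g l := by
  obtain ⟨a, r, σ, ha, hr, hσ, hfg⟩ := h
  refine le_of_forall_gt_imp_ge_of_dense fun b hb => ?_
  have hgb : ∀ᶠ x in l, g (σ x) < b := by
    refine eventually_lt_of_limsup_lt (u := g ∘ σ) ?_ ((isBoundedUnder_comp_of_map_eq hσ _).2 hg)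
    rwa [limsup_comp, hσ]
  have hlim : Tendsto (fun x => a x + r x * b) l (𝓝 b) := by
    simpa using ha.add (hr.mul_const b)
  rw [← hlim.limsup_eq]
  refine limsup_le_limsup ?_ hf.isCoboundedUnder_le hlim.isBoundedUnder_le
  filter_upwards [hfg, hgb, hr.eventually (lt_mem_nhds one_pos)] with x hx hbx hrx
  exact hx.trans (add_le_add le_rfl (mul_le_mul_of_nonneg_left hbx.le hrx.le))

lemma isCoboundedUnder_ge [NeBot l] (h : AsymptoticallyLE l f g)
    (hg : IsCoboundedUnder (· ≥ ·) l g) : IsCoboundedUnder (· ≥ ·) l f := by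
  obtain ⟨a, r, σ, ha, hr, hσ, hfg⟩ := h
  obtain ⟨b, hb⟩ := ((isCoboundedUnder_comp_of_map_eq hσ _).2 hg).frequently_le
  have hlim : Tendsto (fun x => a x + r x * b) l (𝓝 b) := by
    simpa using ha.add (hr.mul_const b)
  refine IsCoboundedUnder.of_frequently_le (a := b + 1) (hb.mp ?_)
  filter_upwards [hfg, hr.eventually (lt_mem_nhds one_pos),
    hlim.eventually (gt_mem_nhds (lt_add_one b))] with x hx hrx hbx hgx
  exact hx.trans ((add_le_add le_rfl (mul_le_mul_of_nonneg_left hgx hrx.le)).trans hbx.le)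

lemma liminf_le [NeBot l] (h : AsymptoticallyLE l f g) (hf : IsBoundedUnder (· ≥ ·) l f)
    (hg : IsCoboundedUnder (· ≥ ·) l g) : liminf f l ≤ liminf g l := by
  obtain ⟨a, r, σ, ha, hr, hσ, hfg⟩ := h
  refine le_of_forall_lt_imp_le_of_dense fun b hb => ?_
  have hlim := ((tendsto_const_nhds (x := b)).sub ha).div hr one_ne_zero
  rw [sub_zero, div_one] at hlim
  calc b = liminf (fun x => (b - a x) / r x) l := hlim.liminf_eq.symm
    _ ≤ liminf (g ∘ σ) l := by
        refine liminf_le_liminf ?_ hlim.isBoundedUnder_ge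
          ((isCoboundedUnder_comp_of_map_eq hσ _).2 hg)
        filter_upwards [hfg, eventually_lt_of_lt_liminf hb hf, hr.eventually (lt_mem_nhds one_pos)]
          with x hx hbx hrx
        rw [Function.comp_apply, div_le_iff₀' hrx]
        linarith
    _ = liminf g l := by rw [liminf_comp, hσ]

end AsymptoticallyLE

lemma limsup_eq_of_asymptoticallyLE [NeBot l] (hfg : AsymptoticallyLE l f g)
    (hgf : AsymptoticallyLE l g f) (hf : IsBoundedUnder (· ≥ ·) l f)
    (hg : IsBoundedUnder (· ≥ ·) l g) : limsup f l = limsup g l := by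
  by_cases hgb : IsBoundedUnder (· ≤ ·) l g
  · have hfb := hfg.isBoundedUnder_le hgb
    exact le_antisymm (hfg.limsup_le hf hgb) (hgf.limsup_le hg hfb)
  · have hfb : ¬ IsBoundedUnder (· ≤ ·) l f := fun hfb => hgb (hgf.isBoundedUnder_le hfb)
    rw [Real.limsup_of_not_isBoundedUnder hfb, Real.limsup_of_not_isBoundedUnder hgb]

lemma liminf_eq_of_asymptoticallyLE [NeBot l] (hfg : AsymptoticallyLE l f g)
    (hgf : AsymptoticallyLE l g f) (hf : IsBoundedUnder (· ≥ ·) l f)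
    (hg : IsBoundedUnder (· ≥ ·) l g) : liminf f l = liminf g l := by
  by_cases hgc : IsCoboundedUnder (· ≥ ·) l g
  · have hfc := hfg.isCoboundedUnder_ge hgc
    exact le_antisymm (hfg.liminf_le hf hgc) (hgf.liminf_le hg hfc)
  · have hfc : ¬ IsCoboundedUnder (· ≥ ·) l f := fun hfc => hgc (hgf.isCoboundedUnder_ge hfc)
    rw [Real.liminf_of_not_isCoboundedUnder hfc, Real.liminf_of_not_isCoboundedUnder hgc]

end AsymptoticallyLE

section LogExponent

lemma map_mul_left_nhdsGT_zero {𝕜 : Type*} [Field 𝕜] [LinearOrder 𝕜] [IsStrictOrderedRing 𝕜]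
    [TopologicalSpace 𝕜] [OrderTopology 𝕜] {c : 𝕜} (hc : 0 < c) :
    map (c * ·) (𝓝[>] 0) = 𝓝[>] 0 := by
  rw [map_eq_comap_of_inverse (n := (c⁻¹ * ·)), comap_mulLeft_nhdsGT_zero (inv_pos.2 hc)]
  · ext x; simp [hc.ne']
  · ext x; simp [hc.ne']

lemma tendsto_log_one_div_nhdsGT_zero :
    Tendsto (fun ε : ℝ => Real.log (1 / ε)) (𝓝[>] 0) atTop := by
  simpa [Real.log_inv] using Real.tendsto_log_nhdsGT_zero

/-- Its `limsup` and `liminf` at `0⁺` are the Diophantine dimension and the lower Diophantine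
dimension of a family of sets whose inclusion lengths are `F ε`. -/
def logExponent (F : ℝ → ℝ) (ε : ℝ) : ℝ := Real.log (F ε) / Real.log (1 / ε)

variable {F G : ℝ → ℝ}

lemma isBoundedUnder_ge_logExponent {δ : ℝ} (hδ : 0 < δ) (hF : ∀ᶠ ε in 𝓝[>] 0, δ ≤ F ε) :
    IsBoundedUnder (· ≥ ·) (𝓝[>] 0) (logExponent F) := by
  have hL := tendsto_log_one_div_nhdsGT_zero
  refine ((tendsto_const_nhds (x := Real.log δ)).div_atTop hL).isBoundedUnder_ge.mono_ge ?_
  filter_upwards [hF, hL.eventually_gt_atTop 0] with ε hε hpos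
  exact div_le_div_of_nonneg_right (Real.log_le_log hδ hε) hpos.le

lemma logExponent_le {C c ε : ℝ} (hC : 0 < C) (hc : 0 < c) (hε : 0 < ε)
    (hL : 0 < Real.log (1 / ε)) (hL' : 0 < Real.log (1 / (c * ε))) (hF : 0 < F ε)
    (hG : 0 < G (c * ε)) (h : F ε ≤ C * G (c * ε)) :
    logExponent F ε ≤ Real.log C / Real.log (1 / ε)
      + (1 - Real.log c / Real.log (1 / ε)) * logExponent G (c * ε) := by
  have hsplit : Real.log (1 / (c * ε)) = Real.log (1 / ε) - Real.log c := by
    rw [one_div, Real.log_inv, Real.log_mul hc.ne' hε.ne', one_div, Real.log_inv]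
    ring
  have hlog : Real.log (F ε) ≤ Real.log C + Real.log (G (c * ε)) := by
    rw [← Real.log_mul hC.ne' hG.ne']
    exact Real.log_le_log hF h
  unfold logExponent
  rw [hsplit] at hL' ⊢
  field_simp
  rw [mul_comm c ε] at hlog
  linarith

lemma asymptoticallyLE_logExponent {C c : ℝ} (hC : 0 < C) (hc : 0 < c)
    (hF : ∀ᶠ ε in 𝓝[>] 0, 0 < F ε) (hG : ∀ᶠ ε in 𝓝[>] 0, 0 < G ε)
    (hFG : ∀ᶠ ε in 𝓝[>] 0, F ε ≤ C * G (c * ε)) :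
    AsymptoticallyLE (𝓝[>] 0) (logExponent F) (logExponent G) := by
  have hL := tendsto_log_one_div_nhdsGT_zero
  refine ⟨fun ε => Real.log C / Real.log (1 / ε), fun ε => 1 - Real.log c / Real.log (1 / ε),
    (c * ·), tendsto_const_nhds.div_atTop hL,
    by simpa using tendsto_const_nhds.sub (tendsto_const_nhds.div_atTop hL),
    map_mul_left_nhdsGT_zero hc, ?_⟩
  filter_upwards [self_mem_nhdsWithin, hF, eventually_nhdsGT_zero_mul_left hc hG, hFG,
    hL.eventually_gt_atTop 0, eventually_nhdsGT_zero_mul_left hc (hL.eventually_gt_atTop 0)]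
    with ε hε hFε hGε h hL₁ hL₂
  exact logExponent_le hC hc hε hL₁ hL₂ hFε hGε h

end LogExponent

section InclusionLength

variable {n : ℕ}

def HasInclusionLength (S : Set (Fin n → ℝ)) (L : ℝ) : Prop :=
  0 ≤ L ∧ ∀ a : Fin n → ℝ, ∃ x, (∀ i, x i ∈ Icc (a i) (a i + L)) ∧ x ∈ S

lemma HasInclusionLength.of_forall_exists_norm_sub_le {S T : Set (Fin n → ℝ)} {L δ : ℝ}
    (hS : HasInclusionLength S L) (v : Fin n → ℝ) (hδ : 0 ≤ δ)
    (hST : ∀ x ∈ S, ∃ y ∈ T, ‖y - (x + v)‖ ≤ δ) : HasInclusionLength T (L + 2 * δ) := by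
  refine ⟨by linarith [hS.1], fun a => ?_⟩
  obtain ⟨x, hxa, hxS⟩ := hS.2 (a - v + fun _ => δ)
  obtain ⟨y, hyT, hyx⟩ := hST x hxS
  refine ⟨y, fun i => ?_, hyT⟩
  have hyi : |y i - (x i + v i)| ≤ δ := (norm_le_pi_norm (y - (x + v)) i).trans hyx
  obtain ⟨h₁, h₂⟩ := hxa i
  simp only [Pi.add_apply, Pi.sub_apply] at h₁ h₂
  constructor <;> linarith [abs_le.1 hyi]

lemma sInf_hasInclusionLength_le_add {S T : Set (Fin n → ℝ)} {δ : ℝ}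
    (hS : ∃ L, HasInclusionLength S L) (v : Fin n → ℝ) (hδ : 0 ≤ δ)
    (hST : ∀ x ∈ S, ∃ y ∈ T, ‖y - (x + v)‖ ≤ δ) :
    sInf {L | HasInclusionLength T L} ≤ sInf {L | HasInclusionLength S L} + 2 * δ := by
  rw [← sub_le_iff_le_add]
  refine le_csInf hS fun L hL => sub_le_iff_le_add.2 (csInf_le ⟨0, fun _ h => h.1⟩ ?_)
  exact hL.of_forall_exists_norm_sub_le v hδ hST

/-- The box centred at `1/2` with side `L < 1 - 2ε` stays farther than `ε` from `ℤ`. -/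
lemma one_sub_two_mul_le_of_hasInclusionLength {S : Set (Fin n → ℝ)} {L ε : ℝ} (i : Fin n)
    (hS : ∀ x ∈ S, ∃ k : ℤ, |x i - k| ≤ ε) (hL : HasInclusionLength S L) : 1 - 2 * ε ≤ L := by
  by_contra! hlt
  obtain ⟨x, hx, hxS⟩ := hL.2 fun _ => (1 - L) / 2
  obtain ⟨k, hk⟩ := hS x hxS
  obtain ⟨h₁, h₂⟩ := hx i
  have hk₀ : (0 : ℝ) < k := by linarith [abs_le.1 hk, hL.1]
  have hk₁ : (k : ℝ) < 1 := by linarith [abs_le.1 hk, hL.1]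
  norm_cast at hk₀ hk₁
  omega

end InclusionLength

/-- The return times of a `ℤⁿ`-orbit in a compact group to a neighbourhood of a point of its
closure are relatively dense: finitely many `ψ p` are `ε/2`-dense in the orbit, so for any box
`ψ b` is close to some `ψ p` with `p` bounded, and `b - p + q₀` lies in the box. -/
lemma exists_hasInclusionLength_of_mem_closure {n : ℕ} {X : Type*} [SeminormedAddCommGroup X]
    [CompactSpace X] (ψ : (Fin n → ℤ) →+ X) {θ : X} (hθ : θ ∈ closure (range ψ)) {ε : ℝ}
    (hε : 0 < ε) :
    ∃ L, HasInclusionLength ((fun q j => (q j : ℝ)) '' {q | dist (ψ q) θ ≤ ε}) L := by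
  have hcover : closure (range ψ) ⊆ ⋃ q, Metric.ball (ψ q) (ε / 2) := fun x hx => by
    obtain ⟨_, ⟨q, rfl⟩, hq⟩ := Metric.mem_closure_iff.1 hx _ (half_pos hε)
    exact mem_iUnion.2 ⟨q, hq⟩
  obtain ⟨s, hs⟩ :=
    isClosed_closure.isCompact.elim_finite_subcover _ (fun _ => Metric.isOpen_ball) hcover
  obtain ⟨_, ⟨q₀, rfl⟩, hq₀⟩ := Metric.mem_closure_iff.1 hθ _ (half_pos hε)
  set R := ∑ p ∈ s, ‖p‖
  have hR : ∀ p ∈ s, ∀ i, |(p i : ℝ)| ≤ R := fun p hp i => by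
    rw [← Int.norm_eq_abs]
    exact (norm_le_pi_norm p i).trans
      (Finset.single_le_sum (f := (‖·‖)) (fun _ _ => norm_nonneg _) hp)
  refine ⟨2 * R + 1, by positivity, fun a => ?_⟩
  set b : Fin n → ℤ := fun i => ⌈a i - q₀ i + R⌉
  obtain ⟨p, hp, hbp⟩ := mem_iUnion₂.1 (hs (subset_closure (mem_range_self b)))
  refine ⟨fun i => ((b - p + q₀) i : ℝ), fun i => ?_, b - p + q₀, ?_, rfl⟩
  · have := abs_le.1 (hR p hp i)
    have := Int.le_ceil (a i - q₀ i + R)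
    have := Int.ceil_lt_add_one (a i - q₀ i + R)
    simp only [Pi.add_apply, Pi.sub_apply, Int.cast_add, Int.cast_sub, mem_Icc, b]
    constructor <;> linarith
  · calc dist (ψ (b - p + q₀)) θ ≤ dist (ψ (b - p + q₀)) (ψ q₀) + dist (ψ q₀) θ :=
          dist_triangle _ _ _
      _ = dist (ψ b) (ψ p) + dist θ (ψ q₀) := by
          rw [dist_eq_norm (ψ _), map_add, map_sub, add_sub_cancel_right, ← dist_eq_norm,
            dist_comm (ψ q₀)]
      _ ≤ ε := by rw [Metric.mem_ball] at hbp; linarith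

lemma Matrix.exists_norm_mulVec_le {m n : ℕ} (A : Matrix (Fin m) (Fin n) ℝ) :
    ∃ K, 0 ≤ K ∧ ∀ v, ‖A *ᵥ v‖ ≤ K * ‖v‖ :=
  ⟨_, norm_nonneg _, fun v => by
    simpa using (LinearMap.toContinuousLinearMap (mulVecLin A)).le_opNorm v⟩

section FinAppend

variable {E : Type*} [SeminormedAddCommGroup E] {a b : ℕ}

theorem Fin.append_add_append (u u' : Fin a → E) (v v' : Fin b → E) :
    Fin.append u v + Fin.append u' v' = Fin.append (u + u') (v + v') := by
  funext i
  refine Fin.addCases (fun j => ?_) (fun j => ?_) i <;> simp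

theorem Fin.norm_append (u : Fin a → E) (v : Fin b → E) : ‖Fin.append u v‖ = max ‖u‖ ‖v‖ := by
  refine le_antisymm ((pi_norm_le_iff_of_nonneg (by positivity)).2 fun i => ?_) (max_le ?_ ?_)
  · refine Fin.addCases (fun j => ?_) (fun j => ?_) i
    · simpa using le_max_of_le_left (norm_le_pi_norm u j)
    · simpa using le_max_of_le_right (norm_le_pi_norm v j)
  · exact (pi_norm_le_iff_of_nonneg (norm_nonneg _)).2 fun j => by
      simpa using norm_le_pi_norm (Fin.append u v) (Fin.castAdd b j)
  · exact (pi_norm_le_iff_of_nonneg (norm_nonneg _)).2 fun j => by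
      simpa using norm_le_pi_norm (Fin.append u v) (Fin.natAdd a j)

end FinAppend

lemma isAP_iff_norm_le {n : ℕ} {X : Type*} [SeminormedAddCommGroup X]
    (φ : (Fin n → ℝ) →+ X) {ε : ℝ} {τ : Fin n → ℝ} : IsAP φ ε τ ↔ ‖φ τ‖ ≤ ε := by
  simp only [IsAP, dist_eq_norm, map_add, add_sub_cancel_left, forall_const]

section Torus

variable {k : ℕ}

def toTorusHom (k : ℕ) : (Fin k → ℝ) →+ Torus k where
  toFun := toTorus
  map_zero' := rfl
  map_add' _ _ := rfl

lemma toTorus_add (x y : Fin k → ℝ) : toTorus (x + y) = toTorus x + toTorus y := rfl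

lemma toTorus_sub (x y : Fin k → ℝ) : toTorus (x - y) = toTorus x - toTorus y :=
  map_sub (toTorusHom k) x y

lemma norm_toTorus_le (x : Fin k → ℝ) : ‖toTorus x‖ ≤ ‖x‖ :=
  (pi_norm_le_iff_of_nonneg (norm_nonneg _)).2 fun i =>
    QuotientAddGroup.norm_mk_le_norm.trans (norm_le_pi_norm x i)

lemma toTorus_intCast (q : Fin k → ℤ) : toTorus (fun j => (q j : ℝ)) = 0 :=
  funext fun j => (AddCircle.coe_eq_zero_iff 1).2 ⟨q j, by simp⟩

lemma exists_intCast_norm_sub_le_norm_toTorus (x : Fin k → ℝ) :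
    ∃ q : Fin k → ℤ, ‖x - fun j => (q j : ℝ)‖ ≤ ‖toTorus x‖ :=
  ⟨fun j => round (x j), (pi_norm_le_iff_of_nonneg (norm_nonneg _)).2 fun j => by
    rw [Pi.sub_apply, Real.norm_eq_abs, ← UnitAddCircle.norm_eq]
    exact norm_le_pi_norm (toTorus x) j⟩

end Torus

section ExtendedFlow

variable {m n : ℕ} (A : Matrix (Fin m) (Fin n) ℝ) (θ : Torus m)

/-- `φ̂(t) = Ât mod ℤ^(n+m)`, where `Â` stacks the identity on top of `A`. -/
def phiHat : (Fin n → ℝ) →+ Torus (n + m) :=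
  AddMonoidHom.mk' (fun t => toTorus (Fin.append t (A *ᵥ t))) fun t s => by
    rw [Matrix.mulVec_add, ← Fin.append_add_append, toTorus_add]

lemma norm_phiHat (τ : Fin n → ℝ) : ‖phiHat A τ‖ = max ‖toTorus τ‖ ‖toTorus (A *ᵥ τ)‖ := by
  have : phiHat A τ = Fin.append (toTorus τ) (toTorus (A *ᵥ τ)) := by
    funext i
    refine Fin.addCases (fun j => ?_) (fun j => ?_) i <;> simp [phiHat, toTorus]
  rw [this, Fin.norm_append]

def intOrbit : Set (Torus m) :=
  range fun q : Fin n → ℤ => toTorus (A *ᵥ fun j => (q j : ℝ))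

def intSolutions (ε : ℝ) : Set (Fin n → ℝ) :=
  (fun q j => (q j : ℝ)) '' {q : Fin n → ℤ | dist (toTorus (A *ᵥ fun j => (q j : ℝ))) θ ≤ ε}

lemma matInclLen_eq_sInf (ε : ℝ) :
    matInclLen A θ ε = sInf {L | HasInclusionLength (intSolutions A θ ε) L} := by
  simp [matInclLen, HasInclusionLength, intSolutions, and_comm]

lemma inclLen_eq_sInf {X : Type*} [PseudoMetricSpace X] (φ : (Fin n → ℝ) → X) (ε : ℝ) :
    inclLen φ ε = sInf {L | HasInclusionLength {τ | IsAP φ ε τ} L} := rfl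

end ExtendedFlow

section Comparison

variable {m n : ℕ} {A : Matrix (Fin m) (Fin n) ℝ} {θ : Torus m} {ε : ℝ}

lemma exists_dist_le_of_mem_closure_intOrbit (hθ : θ ∈ closure (intOrbit A)) (hε : 0 < ε) :
    ∃ q₀ : Fin n → ℤ, dist (toTorus (A *ᵥ fun j => (q₀ j : ℝ))) θ ≤ ε := by
  obtain ⟨_, ⟨q₀, rfl⟩, h⟩ := Metric.mem_closure_iff.1 hθ ε hε
  exact ⟨q₀, (dist_comm θ _ ▸ h).le⟩

lemma exists_hasInclusionLength_intSolutions (hθ : θ ∈ closure (intOrbit A)) (hε : 0 < ε) :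
    ∃ L, HasInclusionLength (intSolutions A θ ε) L :=
  exists_hasInclusionLength_of_mem_closure
    ((toTorusHom m).comp ((mulVecLin A).toAddMonoidHom.comp ((Int.castAddHom ℝ).compLeft _)))
    hθ hε

lemma isAP_phiHat_sub_of_mem_intSolutions {x : Fin n → ℝ} {q₀ : Fin n → ℤ}
    (hq₀ : dist (toTorus (A *ᵥ fun j => (q₀ j : ℝ))) θ ≤ ε) (hx : x ∈ intSolutions A θ ε) :
    IsAP (phiHat A) (2 * ε) (x - fun j => (q₀ j : ℝ)) := by
  obtain ⟨q, hq, rfl⟩ := hx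
  have hint : ((fun j => (q j : ℝ)) - fun j => (q₀ j : ℝ)) = fun j => ((q - q₀) j : ℝ) := by
    ext; simp
  rw [isAP_iff_norm_le, norm_phiHat, max_le_iff]
  constructor
  · rw [hint, toTorus_intCast, norm_zero]
    linarith [dist_nonneg.trans hq]
  · rw [mulVec_sub, toTorus_sub, ← dist_eq_norm]
    exact (dist_triangle_right _ _ θ).trans (by linarith [hq.out])

/-- Rounding an almost period `τ` of `φ̂` to the nearest integer point `q` costs at most `Kε` in
`Aq`, where `K` is a Lipschitz constant of `A`. -/
lemma exists_mem_intSolutions_near_of_isAP {K : ℝ} (hK0 : 0 ≤ K)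
    (hK : ∀ v, ‖A *ᵥ v‖ ≤ K * ‖v‖) {τ : Fin n → ℝ} {q₀ : Fin n → ℤ}
    (hq₀ : dist (toTorus (A *ᵥ fun j => (q₀ j : ℝ))) θ ≤ ε) (hτ : IsAP (phiHat A) ε τ) :
    ∃ y ∈ intSolutions A θ ((K + 2) * ε), ‖y - (τ + fun j => (q₀ j : ℝ))‖ ≤ ε := by
  rw [isAP_iff_norm_le, norm_phiHat, max_le_iff] at hτ
  obtain ⟨q, hq⟩ := exists_intCast_norm_sub_le_norm_toTorus τ
  set r : Fin n → ℝ := fun j => (q j : ℝ)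
  have hr : ‖r - τ‖ ≤ ε := by rw [norm_sub_rev]; linarith
  have hsum : (fun j => ((q + q₀) j : ℝ)) = (r - τ) + τ + fun j => (q₀ j : ℝ) := by
    ext; simp [r]
  refine ⟨_, ⟨q + q₀, ?_, rfl⟩, ?_⟩
  · calc dist (toTorus (A *ᵥ fun j => ((q + q₀) j : ℝ))) θ
        = ‖toTorus (A *ᵥ (r - τ)) + toTorus (A *ᵥ τ)
            + (toTorus (A *ᵥ fun j => (q₀ j : ℝ)) - θ)‖ := by
          rw [hsum, mulVec_add, mulVec_add, toTorus_add, toTorus_add, dist_eq_norm, add_sub_assoc]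
      _ ≤ K * ε + ε + ε := by
          refine norm_add₃_le.trans (add_le_add_three ?_ hτ.2 (dist_eq_norm _ θ ▸ hq₀))
          exact (norm_toTorus_le _).trans ((hK _).trans (mul_le_mul_of_nonneg_left hr hK0))
      _ = (K + 2) * ε := by ring
  · beta_reduce
    rwa [hsum, add_sub_add_right_eq_sub, add_sub_cancel_right]

lemma inclLen_two_mul_le_matInclLen (hθ : θ ∈ closure (intOrbit A)) (hε : 0 < ε) :
    inclLen (phiHat A) (2 * ε) ≤ matInclLen A θ ε := by
  obtain ⟨q₀, hq₀⟩ := exists_dist_le_of_mem_closure_intOrbit hθ hε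
  rw [inclLen_eq_sInf, matInclLen_eq_sInf]
  simpa using sInf_hasInclusionLength_le_add (exists_hasInclusionLength_intSolutions hθ hε)
    (-fun j => (q₀ j : ℝ)) le_rfl fun x hx =>
      ⟨_, isAP_phiHat_sub_of_mem_intSolutions hq₀ hx, by simp [sub_eq_add_neg]⟩

lemma exists_hasInclusionLength_isAP (hθ : θ ∈ closure (intOrbit A)) (hε : 0 < ε) :
    ∃ L, HasInclusionLength {τ | IsAP (phiHat A) ε τ} L := by
  obtain ⟨q₀, hq₀⟩ := exists_dist_le_of_mem_closure_intOrbit hθ (half_pos hε)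
  obtain ⟨L, hL⟩ := exists_hasInclusionLength_intSolutions hθ (half_pos hε)
  have hAP : ∀ x ∈ intSolutions A θ (ε / 2), IsAP (phiHat A) ε (x - fun j => (q₀ j : ℝ)) :=
    fun x hx => by simpa [mul_div_cancel₀] using isAP_phiHat_sub_of_mem_intSolutions hq₀ hx
  exact ⟨_, hL.of_forall_exists_norm_sub_le (-fun j => (q₀ j : ℝ)) le_rfl
    fun x hx => ⟨_, hAP x hx, by simp [sub_eq_add_neg]⟩⟩

lemma matInclLen_le_inclLen_add {K : ℝ} (hK0 : 0 ≤ K) (hK : ∀ v, ‖A *ᵥ v‖ ≤ K * ‖v‖)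
    (hθ : θ ∈ closure (intOrbit A)) (hε : 0 < ε) :
    matInclLen A θ ((K + 2) * ε) ≤ inclLen (phiHat A) ε + 2 * ε := by
  obtain ⟨q₀, hq₀⟩ := exists_dist_le_of_mem_closure_intOrbit hθ hε
  rw [inclLen_eq_sInf, matInclLen_eq_sInf]
  exact sInf_hasInclusionLength_le_add (exists_hasInclusionLength_isAP hθ hε) _ hε.le
    fun _ hτ => exists_mem_intSolutions_near_of_isAP hK0 hK hq₀ hτ

lemma one_sub_two_mul_le_inclLen (hn : 0 < n) (hθ : θ ∈ closure (intOrbit A)) (hε : 0 < ε) :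
    1 - 2 * ε ≤ inclLen (phiHat A) ε := by
  refine le_csInf (exists_hasInclusionLength_isAP hθ hε) fun L hL =>
    one_sub_two_mul_le_of_hasInclusionLength ⟨0, hn⟩ (fun τ hτ => ?_) hL
  replace hτ : IsAP (phiHat A) ε τ := hτ
  rw [isAP_iff_norm_le, norm_phiHat, max_le_iff] at hτ
  obtain ⟨q, hq⟩ := exists_intCast_norm_sub_le_norm_toTorus τ
  exact ⟨q ⟨0, hn⟩, (norm_le_pi_norm _ _).trans (hq.trans hτ.1)⟩

end Comparison

section EventualBounds

variable {m n : ℕ} {A : Matrix (Fin m) (Fin n) ℝ} {θ : Torus m}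

lemma eventually_half_le_inclLen (hn : 0 < n) (hθ : θ ∈ closure (intOrbit A)) :
    ∀ᶠ ε in 𝓝[>] 0, 1 / 2 ≤ inclLen (phiHat A) ε := by
  filter_upwards [Ioo_mem_nhdsGT (show (0 : ℝ) < 1 / 4 by norm_num)] with ε ⟨hε, hε'⟩
  linarith [one_sub_two_mul_le_inclLen hn hθ hε]

lemma eventually_half_le_matInclLen (hn : 0 < n) (hθ : θ ∈ closure (intOrbit A)) :
    ∀ᶠ ε in 𝓝[>] 0, 1 / 2 ≤ matInclLen A θ ε := by
  filter_upwards [Ioo_mem_nhdsGT (show (0 : ℝ) < 1 / 8 by norm_num)] with ε ⟨hε, hε'⟩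
  linarith [one_sub_two_mul_le_inclLen hn hθ (mul_pos two_pos hε),
    inclLen_two_mul_le_matInclLen hθ hε]

lemma eventually_matInclLen_le_two_mul {K : ℝ} (hK0 : 0 ≤ K) (hK : ∀ v, ‖A *ᵥ v‖ ≤ K * ‖v‖)
    (hn : 0 < n) (hθ : θ ∈ closure (intOrbit A)) :
    ∀ᶠ ε in 𝓝[>] 0, matInclLen A θ ε ≤ 2 * inclLen (phiHat A) ((K + 2)⁻¹ * ε) := by
  filter_upwards [Ioo_mem_nhdsGT (show (0 : ℝ) < 1 / 4 by norm_num)] with ε ⟨hε, hε'⟩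
  have hcε : 0 < (K + 2)⁻¹ * ε := by positivity
  have hcε' : (K + 2)⁻¹ * ε ≤ ε / 2 := by
    rw [inv_mul_le_iff₀ (by positivity)]
    nlinarith
  have h := matInclLen_le_inclLen_add hK0 hK hθ hcε
  rw [← mul_assoc, mul_inv_cancel₀ (by positivity), one_mul] at h
  linarith [one_sub_two_mul_le_inclLen hn hθ hcε]

lemma eventually_inclLen_le_matInclLen (hθ : θ ∈ closure (intOrbit A)) :
    ∀ᶠ ε in 𝓝[>] 0, inclLen (phiHat A) ε ≤ 1 * matInclLen A θ (2⁻¹ * ε) := by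
  filter_upwards [self_mem_nhdsWithin] with ε hε
  rw [one_mul, inv_mul_eq_div]
  simpa [mul_div_cancel₀] using inclLen_two_mul_le_matInclLen hθ (half_pos hε)

end EventualBounds

theorem discrete_eq_continuous_dioDim_general (m n : ℕ) (hn : 0 < n)
    (A : Matrix (Fin m) (Fin n) ℝ) (θ : Torus m)
    (hθ : θ ∈ closure {x : Torus m | ∃ q : Fin n → ℤ,
      x = toTorus (A.mulVec fun j => (q j : ℝ))}) :
    Filter.limsup
        (fun ε : ℝ => Real.log (matInclLen A θ ε) / Real.log (1 / ε))
        (nhdsWithin 0 (Set.Ioi 0)) =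
      Filter.limsup
        (fun ε : ℝ => Real.log
          (inclLen (fun t : Fin n → ℝ => toTorus (Fin.append t (A.mulVec t))) ε) /
            Real.log (1 / ε))
        (nhdsWithin 0 (Set.Ioi 0)) ∧
    Filter.liminf
        (fun ε : ℝ => Real.log (matInclLen A θ ε) / Real.log (1 / ε))
        (nhdsWithin 0 (Set.Ioi 0)) =
      Filter.liminf
        (fun ε : ℝ => Real.log
          (inclLen (fun t : Fin n → ℝ => toTorus (Fin.append t (A.mulVec t))) ε) /
            Real.log (1 / ε))
        (nhdsWithin 0 (Set.Ioi 0)) := by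
  replace hθ : θ ∈ closure (intOrbit A) := by
    convert hθ using 2
    ext
    simp [intOrbit, eq_comm]
  obtain ⟨K, hK0, hK⟩ := A.exists_norm_mulVec_le
  have hF := eventually_half_le_matInclLen hn hθ
  have hG := eventually_half_le_inclLen hn hθ
  have hF₀ := hF.mono fun _ h => (one_half_pos (α := ℝ)).trans_le h
  have hG₀ := hG.mono fun _ h => (one_half_pos (α := ℝ)).trans_le h
  have hFG := asymptoticallyLE_logExponent two_pos (by positivity) hF₀ hG₀
    (eventually_matInclLen_le_two_mul hK0 hK hn hθ)
  have hGF := asymptoticallyLE_logExponent one_pos (by norm_num) hG₀ hF₀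
    (eventually_inclLen_le_matInclLen hθ)
  have hFb := isBoundedUnder_ge_logExponent one_half_pos hF
  have hGb := isBoundedUnder_ge_logExponent one_half_pos hG
  exact ⟨limsup_eq_of_asymptoticallyLE hFG hGF hFb hGb,
    liminf_eq_of_asymptoticallyLE hFG hGF hFb hGb⟩

/-- The Diophantine dimensions of the family of integer solution sets of
`|Aq − θ|_m ≤ ε` coincide with those of the extended almost periodic function
`φ̂(t) = Ât = (t, At) mod ℤ^(n+m)`. -/
theorem discrete_eq_continuous_dioDim (m n : ℕ) (hm : 0 < m) (hn : 0 < n)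
    (A : Matrix (Fin m) (Fin n) ℝ) (θ : Torus m)
    (hθ : θ ∈ closure {x : Torus m | ∃ q : Fin n → ℤ,
      x = toTorus (A.mulVec fun j => (q j : ℝ))}) :
    Filter.limsup
        (fun ε : ℝ => Real.log (matInclLen A θ ε) / Real.log (1 / ε))
        (nhdsWithin 0 (Set.Ioi 0)) =
      Filter.limsup
        (fun ε : ℝ => Real.log
          (inclLen (fun t : Fin n → ℝ => toTorus (Fin.append t (A.mulVec t))) ε) /
            Real.log (1 / ε))
        (nhdsWithin 0 (Set.Ioi 0)) ∧
    Filter.liminf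
        (fun ε : ℝ => Real.log (matInclLen A θ ε) / Real.log (1 / ε))
        (nhdsWithin 0 (Set.Ioi 0)) =
      Filter.liminf
        (fun ε : ℝ => Real.log
          (inclLen (fun t : Fin n → ℝ => toTorus (Fin.append t (A.mulVec t))) ε) /
            Real.log (1 / ε))
        (nhdsWithin 0 (Set.Ioi 0)) :=
  discrete_eq_continuous_dioDim_general m n hn A θ hθ
end
end
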